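/- Let ▷' be obtained from the order of precedence ▷ by swapping a category c with its immediate predecessor c' (so that c is processed earlier under ▷'). Then the maximum equilibrium cutoff of c under φ_{▷'} is weakly higher (with respect to π_c) than under φ_▷: f̄^{φ_{▷'}}_c weakly-π_c f̄^{φ_▷}_c. In particular, processing a category earlier weakly increases its selectivity. -/

import Mathlib

/-!
Both precedence orders process the categories of `L1` identically and leave the same pool `A`.
Under `▷'` category `c` then takes its `r c` best eligible patients from `A`; under `▷` it takes
them from the smaller pool that `c'` leaves behind. Choosing from a sub-pool can only lower the
`π_c`-lowest chosen patient, and can leave `c` unfilled only if it is already unfilled on `A`.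
-/

open Finset

section ReserveSystem

variable {I C : Type*} [Fintype I] [DecidableEq I] [Fintype C] [DecidableEq C]

/-- Patient `i` is eligible for category `c` (i.e. `i π_c ∅`). Priorities are encoded by
injective score functions `pr c : Option I → ℕ`, where `none` stands for `∅` and a
higher score means a higher priority. -/
def Elig (pr : C → Option I → ℕ) (c : C) (i : I) : Prop :=
  pr c none < pr c (some i)

instance (pr : C → Option I → ℕ) (c : C) (i : I) : Decidable (Elig pr c i) := by
  unfold Elig; infer_instance

/-- A matching assigns each patient a category or `none`, respecting capacities `r`. -/
def IsMatching (r : C → ℕ) (μ : I → Option C) : Prop :=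
  ∀ c : C, (univ.filter (fun i => μ i = some c)).card ≤ r c

/-- `f` is the maximum cutoff vector `f̄^μ` of matching `μ`:
`f̄^μ_c = min_{π_c} μ⁻¹(c)` when category `c` is full, and `∅` otherwise. -/
def IsMaxCutoff (pr : C → Option I → ℕ) (r : C → ℕ) (μ : I → Option C)
    (f : C → Option I) : Prop :=
  ∀ c, ((univ.filter (fun i => μ i = some c)).card = r c ∧
          ∃ m, f c = some m ∧ μ m = some c ∧
            ∀ j, μ j = some c → pr c (some m) ≤ pr c (some j))
    ∨ ((univ.filter (fun i => μ i = some c)).card ≠ r c ∧ f c = none)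

/-- Patients selected when category `c` with `k` units is processed on the pool `avail`:
the `k` highest-`π_c`-priority eligible patients (all eligible ones if fewer than `k`). -/
def seqTop (pr : C → Option I → ℕ) (c : C) (k : ℕ) (avail : Finset I) : Finset I :=
  (avail.filter (fun i => Elig pr c i)).filter (fun i =>
    ((avail.filter (fun i' => Elig pr c i')).filter
        (fun j => pr c (some i) < pr c (some j))).card < k)

/-- The sequential reserve matching induced by processing the given list of categories in
order, over the pool `avail` of patients. -/
def seqMatch (pr : C → Option I → ℕ) (r : C → ℕ) : List C → Finset I → I → Option C
  | [], _, _ => none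
  | c :: L, avail, i =>
      if i ∈ seqTop pr c (r c) avail then some c
      else seqMatch pr r L (avail \ seqTop pr c (r c) avail) i

end ReserveSystem

section SequentialReserve

variable {I C : Type*}

def IsCutoff (p : Option I → ℕ) (k : ℕ) (S : Finset I) (o : Option I) : Prop :=
  (S.card = k ∧ ∃ m, o = some m ∧ m ∈ S ∧ ∀ j ∈ S, p (some m) ≤ p (some j))
    ∨ (S.card ≠ k ∧ o = none)

lemma IsMaxCutoff.isCutoff [Fintype I] [DecidableEq C] {pr : C → Option I → ℕ} {r : C → ℕ}
    {μ : I → Option C} {f : C → Option I} (h : IsMaxCutoff pr r μ f) (c : C) :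
    IsCutoff (pr c) (r c) (univ.filter fun i => μ i = some c) (f c) := by
  rcases h c with ⟨hcard, m, hm, hμm, hmin⟩ | hnone
  · exact Or.inl ⟨hcard, m, hm, by simpa using hμm, fun j hj => hmin j (by simpa using hj)⟩
  · exact Or.inr hnone

section SeqTop

variable (pr : C → Option I → ℕ) (c : C) (k : ℕ) (a : Finset I)

def eligAbove (i : I) : Finset I :=
  (a.filter fun j => Elig pr c j).filter fun j => pr c (some i) < pr c (some j)

lemma mem_seqTop {i : I} :
    i ∈ seqTop pr c k a ↔ i ∈ a ∧ Elig pr c i ∧ (eligAbove pr c a i).card < k := by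
  simp only [seqTop, eligAbove, mem_filter, and_assoc]

lemma seqTop_subset_filter_elig : seqTop pr c k a ⊆ a.filter fun i => Elig pr c i :=
  filter_subset _ _

lemma seqTop_subset : seqTop pr c k a ⊆ a :=
  (seqTop_subset_filter_elig pr c k a).trans (filter_subset _ _)

variable [DecidableEq I]

lemma card_seqTop_le (hpr : Function.Injective (pr c)) : (seqTop pr c k a).card ≤ k := by
  by_contra! hk
  obtain ⟨i, hi, hmin⟩ := (seqTop pr c k a).exists_min_image (fun j => pr c (some j))
    (card_pos.mp (by omega))
  -- by injectivity, every other selected patient ranks strictly above the lowest one `i`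
  have hsub : (seqTop pr c k a).erase i ⊆ eligAbove pr c a i := by
    intro j hj
    obtain ⟨hji, hj⟩ := mem_erase.mp hj
    refine mem_filter.mpr ⟨seqTop_subset_filter_elig pr c k a hj, ?_⟩
    exact (hmin j hj).lt_of_ne fun h => hji (Option.some_injective _ (hpr h)).symm
  have hrank := ((mem_seqTop pr c k a).mp hi).2.2
  have := card_le_card hsub
  rw [card_erase_of_mem hi] at this
  omega

lemma seqTop_eq_filter_elig_of_card_lt (h : (seqTop pr c k a).card < k) :
    seqTop pr c k a = a.filter fun i => Elig pr c i := by
  by_contra hne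
  have hrest : ((a.filter fun i => Elig pr c i) \ seqTop pr c k a).Nonempty :=
    sdiff_nonempty.mpr fun hsub => hne ((seqTop_subset_filter_elig pr c k a).antisymm hsub)
  obtain ⟨i, hi, hmax⟩ := exists_max_image _ (fun j => pr c (some j)) hrest
  obtain ⟨hiE, hiTop⟩ := mem_sdiff.mp hi
  -- every eligible patient ranked above the best rejected one `i` is selected
  have hsub : eligAbove pr c a i ⊆ seqTop pr c k a := by
    intro j hj
    obtain ⟨hjE, hij⟩ := mem_filter.mp hj
    by_contra hjTop
    exact (hmax j (mem_sdiff.mpr ⟨hjE, hjTop⟩)).not_gt hij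
  have hrank : ¬ (eligAbove pr c a i).card < k := fun hlt =>
    hiTop ((mem_seqTop pr c k a).mpr ⟨(mem_filter.mp hiE).1, (mem_filter.mp hiE).2, hlt⟩)
  have := card_le_card hsub
  omega

lemma card_filter_elig_lt_of_card_seqTop_ne (hpr : Function.Injective (pr c))
    (h : (seqTop pr c k a).card ≠ k) : (a.filter fun i => Elig pr c i).card < k := by
  have hlt := (card_seqTop_le pr c k a hpr).lt_of_ne h
  rwa [seqTop_eq_filter_elig_of_card_lt pr c k a hlt] at hlt

lemma IsCutoff.pr_le_of_subset (hpr : Function.Injective (pr c)) {B A : Finset I}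
    (hBA : B ⊆ A) {o o' : Option I} (ho : IsCutoff (pr c) k (seqTop pr c k B) o)
    (ho' : IsCutoff (pr c) k (seqTop pr c k A) o') : pr c o ≤ pr c o' := by
  have hElig : (B.filter fun i => Elig pr c i) ⊆ A.filter fun i => Elig pr c i :=
    filter_subset_filter _ hBA
  have hTopB : seqTop pr c k B ⊆ A.filter fun i => Elig pr c i :=
    (seqTop_subset_filter_elig pr c k B).trans hElig
  rcases ho' with ⟨-, m', rfl, hm', -⟩ | ⟨hcard', rfl⟩
  · obtain ⟨-, hm'Elig, hm'rank⟩ := (mem_seqTop pr c k A).mp hm'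
    rcases ho with ⟨hcard, m, rfl, -, hmin⟩ | ⟨-, rfl⟩
    · by_contra! hlt
      -- all `k` patients selected from `B` would rank above `m'`, which has fewer than `k` above it
      have hsub : seqTop pr c k B ⊆ eligAbove pr c A m' := fun x hx =>
        mem_filter.mpr ⟨hTopB hx, hlt.trans_le (hmin x hx)⟩
      have := card_le_card hsub
      omega
    · exact hm'Elig.le
  · rcases ho with ⟨hcard, -⟩ | ⟨-, rfl⟩
    · have := card_filter_elig_lt_of_card_seqTop_ne pr c k A hpr hcard'
      have := card_le_card hTopB
      omega
    · exact le_rfl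

end SeqTop

section SeqMatch

variable [DecidableEq I] (pr : C → Option I → ℕ) (r : C → ℕ)

def availAfter : List C → Finset I → Finset I
  | [], a => a
  | c :: L, a => availAfter L (a \ seqTop pr c (r c) a)

lemma availAfter_subset : ∀ (L : List C) (a : Finset I), availAfter pr r L a ⊆ a
  | [], _ => subset_rfl
  | _ :: L, _ => (availAfter_subset L _).trans sdiff_subset

lemma availAfter_append : ∀ (L M : List C) (a : Finset I),
    availAfter pr r (L ++ M) a = availAfter pr r M (availAfter pr r L a)
  | [], _, _ => rfl
  | _ :: L, M, _ => availAfter_append L M _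

lemma seqMatch_ne_some_of_not_mem {c : C} :
    ∀ {L : List C}, c ∉ L → ∀ (a : Finset I) (i : I), seqMatch pr r L a i ≠ some c
  | [], _, _, _ => by simp [seqMatch]
  | d :: L, hc, a, i => by
    rw [List.mem_cons, not_or] at hc
    unfold seqMatch
    split
    · exact fun h => hc.1 (Option.some_injective _ h).symm
    · exact seqMatch_ne_some_of_not_mem hc.2 _ i

lemma filter_seqMatch_eq_seqTop [Fintype I] [DecidableEq C] {c : C} {L₂ : List C}
    (hc₂ : c ∉ L₂) :
    ∀ {L₁ : List C}, c ∉ L₁ → ∀ a : Finset I,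
      univ.filter (fun i => seqMatch pr r (L₁ ++ c :: L₂) a i = some c)
        = seqTop pr c (r c) (availAfter pr r L₁ a)
  | [], _, a => by
    ext i
    by_cases hi : i ∈ seqTop pr c (r c) a <;>
      simp [seqMatch, availAfter, hi, seqMatch_ne_some_of_not_mem pr r hc₂]
  | d :: L₁, hc₁, a => by
    rw [List.mem_cons, not_or] at hc₁
    ext i
    by_cases hi : i ∈ seqTop pr d (r d) a
    · have hiA : i ∉ seqTop pr c (r c) (availAfter pr r L₁ (a \ seqTop pr d (r d) a)) :=
        fun h => (mem_sdiff.mp (availAfter_subset pr r L₁ _ (seqTop_subset pr c (r c) _ h))).2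
          hi
      simp [seqMatch, availAfter, hi, hiA, Ne.symm hc₁.1]
    · simpa [seqMatch, availAfter, hi] using
        Finset.ext_iff.mp (filter_seqMatch_eq_seqTop hc₂ hc₁.2 (a \ seqTop pr d (r d) a)) i

end SeqMatch

end SequentialReserve

section ReserveSystem

variable {I C : Type*} [Fintype I] [DecidableEq I] [Fintype C] [DecidableEq C]

theorem earlier_processing_raises_cutoff_general
    (pr : C → Option I → ℕ) (hpr : ∀ c, Function.Injective (pr c))
    (r : C → ℕ) (c c' : C) (hne : c' ≠ c) (L1 L2 : List C)
    (hnd : (L1 ++ c' :: c :: L2).Nodup)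
    (fbar fbar' : C → Option I)
    (hfbar : IsMaxCutoff pr r (seqMatch pr r (L1 ++ c' :: c :: L2) univ) fbar)
    (hfbar' : IsMaxCutoff pr r (seqMatch pr r (L1 ++ c :: c' :: L2) univ) fbar') :
    pr c (fbar c) ≤ pr c (fbar' c) := by
  obtain ⟨-, hnd', hdisj⟩ := List.nodup_append'.mp hnd
  have hc₁ : c ∉ L1 := fun h => hdisj h (by simp)
  have hc₂ : c ∉ L2 := (List.nodup_cons.mp (List.nodup_cons.mp hnd').2).1
  have hpool : univ.filter (fun i => seqMatch pr r (L1 ++ c' :: c :: L2) univ i = some c)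
      = seqTop pr c (r c) (availAfter pr r (L1 ++ [c']) univ) := by
    simpa using filter_seqMatch_eq_seqTop pr r hc₂ (L₁ := L1 ++ [c'])
      (by simp [hc₁, hne.symm]) univ
  have hpool' : univ.filter (fun i => seqMatch pr r (L1 ++ c :: c' :: L2) univ i = some c)
      = seqTop pr c (r c) (availAfter pr r L1 univ) :=
    filter_seqMatch_eq_seqTop pr r (by simp [hne.symm, hc₂]) hc₁ univ
  have hsub : availAfter pr r (L1 ++ [c']) univ ⊆ availAfter pr r L1 univ := by
    rw [availAfter_append]
    exact availAfter_subset pr r _ _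
  exact IsCutoff.pr_le_of_subset pr c (r c) (hpr c) hsub
    (hpool ▸ hfbar.isCutoff c) (hpool' ▸ hfbar'.isCutoff c)

/-- Proposition 2: swapping category `c` with its immediate predecessor `c'` (so that `c`
is processed earlier) weakly raises the maximum equilibrium cutoff of `c`. -/
theorem earlier_processing_raises_cutoff
    (pr : C → Option I → ℕ) (hpr : ∀ c, Function.Injective (pr c))
    (r : C → ℕ) (c c' : C) (hne : c' ≠ c) (L1 L2 : List C)
    (hnd : (L1 ++ c' :: c :: L2).Nodup)
    (hall : ∀ x : C, x ∈ L1 ++ c' :: c :: L2)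
    (fbar fbar' : C → Option I)
    (hfbar : IsMaxCutoff pr r (seqMatch pr r (L1 ++ c' :: c :: L2) univ) fbar)
    (hfbar' : IsMaxCutoff pr r (seqMatch pr r (L1 ++ c :: c' :: L2) univ) fbar') :
    pr c (fbar c) ≤ pr c (fbar' c) :=
  earlier_processing_raises_cutoff_general pr hpr r c c' hne L1 L2 hnd fbar fbar' hfbar hfbar'

end ReserveSystem
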